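/- Strict decrease of the energy (Lemma 2): Let x be a feasible curve that is not a critical point of the discretized energy E, i.e., the gradient of E with respect to some interior point x_t (1 ≤ t ≤ T−1) is nonzero. Let x̃ be the curve produced by the GEORCE update of x (x̃_0 = a, x̃_{t+1} = x̃_t + ũ_t). Then there exists η ∈ (0,1] such that for every α with 0 < α ≤ η, E((1−α)x + α x̃) < E(x). -/

import Mathlib

open Matrix

/-- Reinterpret a vector in `Fin d → ℝ` as a point of `EuclideanSpace ℝ (Fin d)`
(the two types are definitionally equal). -/
def toE (d : ℕ) (v : Fin d → ℝ) : EuclideanSpace ℝ (Fin d) := WithLp.toLp 2 v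

/-- The discretized energy functional. -/
noncomputable def energy (d T : ℕ)
    (G : EuclideanSpace ℝ (Fin d) → Matrix (Fin d) (Fin d) ℝ)
    (x : ℕ → EuclideanSpace ℝ (Fin d)) : ℝ :=
  ∑ t ∈ Finset.range T, (x (t + 1) - x t) ⬝ᵥ (G (x t)).mulVec (x (t + 1) - x t)

section Aux

variable {d : ℕ} {G : EuclideanSpace ℝ (Fin d) → Matrix (Fin d) (Fin d) ℝ}

lemma georce_line_hasDerivAt (p v : EuclideanSpace ℝ (Fin d)) :
    HasDerivAt (fun α : ℝ => p + α • v) v 0 := by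
  have h := ((hasDerivAt_id (0:ℝ)).smul_const v).const_add p
  simpa using h

lemma georce_entry_hasDerivAt (hGsmooth : ∀ i j, ContDiff ℝ (⊤ : ℕ∞) fun y => G y i j)
    (p v : EuclideanSpace ℝ (Fin d)) (i j : Fin d) :
    HasDerivAt (fun α : ℝ => G (p + α • v) i j)
      (fderiv ℝ (fun y => G y i j) p v) 0 := by
  have hp : p + (0:ℝ) • v = p := by simp
  have hd : HasFDerivAt (fun y => G y i j) (fderiv ℝ (fun y => G y i j) p) (p + (0:ℝ) • v) := by
    rw [hp]; exact (((hGsmooth i j).differentiable (by simp)) p).hasFDerivAt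
  exact hd.comp_hasDerivAt 0 (georce_line_hasDerivAt p v)

lemma georce_fq_hasFDerivAt (hGsmooth : ∀ i j, ContDiff ℝ (⊤ : ℕ∞) fun y => G y i j)
    (q : Fin d → ℝ) (p : EuclideanSpace ℝ (Fin d)) :
    HasFDerivAt (fun y => q ⬝ᵥ (G y).mulVec q)
      (∑ i, q i • ∑ j, q j • fderiv ℝ (fun y => G y i j) p) p := by
  have h : ∀ i : Fin d, HasFDerivAt (fun y => ∑ j, G y i j * q j)
      (∑ j, q j • fderiv ℝ (fun y => G y i j) p) p := by
    intro i
    apply HasFDerivAt.fun_sum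
    intro j _
    exact ((((hGsmooth i j).differentiable (by simp)) p).hasFDerivAt).mul_const (q j)
  have h2 : HasFDerivAt (fun y => ∑ i, q i * ∑ j, G y i j * q j)
      (∑ i, q i • ∑ j, q j • fderiv ℝ (fun y => G y i j) p) p := by
    apply HasFDerivAt.fun_sum
    intro i _
    exact (h i).const_mul (q i)
  have hfun : (fun y => q ⬝ᵥ (G y).mulVec q) = fun y => ∑ i, q i * ∑ j, G y i j * q j := by
    funext y; simp [dotProduct, mulVec]
  rw [hfun]; exact h2

lemma georce_grad_inner (hGsmooth : ∀ i j, ContDiff ℝ (⊤ : ℕ∞) fun y => G y i j)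
    (q : Fin d → ℝ) (p v : EuclideanSpace ℝ (Fin d)) :
    @inner ℝ _ _ (gradient (fun y => q ⬝ᵥ (G y).mulVec q) p) v
      = ∑ i, q i * ∑ j, q j * fderiv ℝ (fun y => G y i j) p v := by
  rw [gradient, InnerProductSpace.toDual_symm_apply,
    (georce_fq_hasFDerivAt hGsmooth q p).fderiv]
  simp [ContinuousLinearMap.sum_apply]

lemma georce_dot_symm (A : Matrix (Fin d) (Fin d) ℝ) (hA : A.IsSymm) (u w : Fin d → ℝ) :
    u ⬝ᵥ A *ᵥ w = w ⬝ᵥ A *ᵥ u := by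
  simp only [dotProduct, mulVec, Finset.mul_sum]
  rw [Finset.sum_comm]
  refine Finset.sum_congr rfl fun i _ => Finset.sum_congr rfl fun j _ => ?_
  rw [hA.apply]; ring

lemma georce_mulVec_dot (A : Matrix (Fin d) (Fin d) ℝ) (hA : A.IsSymm) (u z : Fin d → ℝ) :
    (A *ᵥ u) ⬝ᵥ z = u ⬝ᵥ (A *ᵥ z) := by
  rw [dotProduct_comm, georce_dot_symm A hA z u]

lemma georce_inner_dot (a b : EuclideanSpace ℝ (Fin d)) :
    @inner ℝ _ _ a b = (a : Fin d → ℝ) ⬝ᵥ (b : Fin d → ℝ) := by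
  simp [PiLp.inner_apply, RCLike.inner_apply, conj_trivial, dotProduct]
  exact Finset.sum_congr rfl fun _ _ => mul_comm _ _

lemma georce_term_hasDerivAt (hGsmooth : ∀ i j, ContDiff ℝ (⊤ : ℕ∞) fun y => G y i j)
    (hGsym : ∀ y, (G y).IsSymm)
    (p v q w : EuclideanSpace ℝ (Fin d)) :
    HasDerivAt
      (fun α : ℝ => (q + α • w) ⬝ᵥ (G (p + α • v)).mulVec (q + α • w))
      (2 * (q ⬝ᵥ (G p).mulVec w)
        + @inner ℝ _ _ (gradient (fun y => q ⬝ᵥ (G y).mulVec q) p) v) 0 := by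
  have hq : ∀ i : Fin d, HasDerivAt (fun α : ℝ => q i + α * w i) (w i) 0 := fun i => by
    simpa using ((hasDerivAt_id (0:ℝ)).mul_const (w i)).const_add (q i)
  have key : HasDerivAt
      (fun α : ℝ => ∑ i, (q i + α * w i) * ∑ j, G (p + α • v) i j * (q j + α * w j))
      (∑ i, (w i * (∑ j, G (p + (0:ℝ) • v) i j * (q j + 0 * w j))
        + (q i + 0 * w i) * ∑ j, (fderiv ℝ (fun y => G y i j) p v * (q j + 0 * w j)
            + G (p + (0:ℝ) • v) i j * w j))) 0 := by
    apply HasDerivAt.fun_sum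
    intro i _
    exact (hq i).mul (HasDerivAt.fun_sum fun j _ =>
      (georce_entry_hasDerivAt hGsmooth p v i j).mul (hq j))
  have hfun : (fun α : ℝ => (q + α • w) ⬝ᵥ (G (p + α • v)).mulVec (q + α • w))
      = fun α : ℝ => ∑ i, (q i + α * w i) * ∑ j, G (p + α • v) i j * (q j + α * w j) := by
    funext α
    simp [dotProduct, mulVec, PiLp.add_apply, PiLp.smul_apply, smul_eq_mul]
  rw [hfun]
  convert key using 1
  simp only [zero_smul, add_zero, zero_mul]
  rw [georce_grad_inner hGsmooth q p v]
  have e1 : ∑ i, w i * ∑ j, G p i j * q j = q ⬝ᵥ (G p) *ᵥ w := by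
    rw [georce_dot_symm (G p) (hGsym p) q w]
    simp [dotProduct, mulVec]
  have e2 : ∑ i, q i * ∑ j, G p i j * w j = q ⬝ᵥ (G p) *ᵥ w := by
    simp [dotProduct, mulVec]
  calc 2 * (q ⬝ᵥ (G p) *ᵥ w) + ∑ i, q i * ∑ j, q j * fderiv ℝ (fun y => G y i j) p v
      = (∑ i, w i * ∑ j, G p i j * q j)
        + ((∑ i, q i * ∑ j, fderiv ℝ (fun y => G y i j) p v * q j)
          + ∑ i, q i * ∑ j, G p i j * w j) := by
        rw [e1, e2]
        have e3 : ∑ i, q i * ∑ j, q j * fderiv ℝ (fun y => G y i j) p v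
            = ∑ i, q i * ∑ j, fderiv ℝ (fun y => G y i j) p v * q j := by
          refine Finset.sum_congr rfl fun i _ => ?_
          congr 1
          exact Finset.sum_congr rfl fun j _ => mul_comm _ _
        rw [e3]; ring
    _ = ∑ i, (w i * ∑ j, G p i j * q j
          + q i * ∑ j, (fderiv ℝ (fun y => G y i j) p v * q j + G p i j * w j)) := by
        rw [Finset.sum_add_distrib]
        congr 1
        rw [← Finset.sum_add_distrib]
        refine Finset.sum_congr rfl fun i _ => ?_
        rw [Finset.sum_add_distrib, mul_add]

lemma georce_update_energy_diff (hGsmooth : ∀ i j, ContDiff ℝ (⊤ : ℕ∞) fun y => G y i j)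
    (T t0 : ℕ) (x : ℕ → EuclideanSpace ℝ (Fin d)) :
    DifferentiableAt ℝ (fun y => energy d T G (Function.update x t0 y)) (x t0) := by
  have hcoord : ∀ (k : ℕ) (i : Fin d),
      DifferentiableAt ℝ (fun y : EuclideanSpace ℝ (Fin d) => Function.update x t0 y k i) (x t0) := by
    intro k i
    by_cases h : k = t0
    · have : (fun y : EuclideanSpace ℝ (Fin d) => Function.update x t0 y k i)
          = fun y : EuclideanSpace ℝ (Fin d) => (EuclideanSpace.proj i : EuclideanSpace ℝ (Fin d) →L[ℝ] ℝ) y := by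
        funext y; simp [h]
      rw [this]
      exact (EuclideanSpace.proj (𝕜 := ℝ) i).differentiableAt
    · have : (fun y : EuclideanSpace ℝ (Fin d) => Function.update x t0 y k i)
          = fun _ => x k i := by funext y; simp [Function.update_of_ne h]
      rw [this]; exact differentiableAt_const _
  have hGent : ∀ (k : ℕ) (i j : Fin d),
      DifferentiableAt ℝ (fun y : EuclideanSpace ℝ (Fin d) => G (Function.update x t0 y k) i j) (x t0) := by
    intro k i j
    by_cases h : k = t0
    · have : (fun y : EuclideanSpace ℝ (Fin d) => G (Function.update x t0 y k) i j)
          = fun y => G y i j := by funext y; rw [h]; simp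
      rw [this]
      exact ((hGsmooth i j).differentiable (by simp)) _
    · have : (fun y : EuclideanSpace ℝ (Fin d) => G (Function.update x t0 y k) i j)
          = fun _ => G (x k) i j := by funext y; simp [Function.update_of_ne h]
      rw [this]; exact differentiableAt_const _
  unfold energy
  apply DifferentiableAt.fun_sum
  intro s _
  have heq : (fun y => (Function.update x t0 y (s+1) - Function.update x t0 y s) ⬝ᵥ
        (G (Function.update x t0 y s)).mulVec (Function.update x t0 y (s+1) - Function.update x t0 y s))
      = fun y => ∑ i, (Function.update x t0 y (s+1) i - Function.update x t0 y s i)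
          * ∑ j, G (Function.update x t0 y s) i j
            * (Function.update x t0 y (s+1) j - Function.update x t0 y s j) := by
    funext y
    simp [dotProduct, mulVec, PiLp.sub_apply]
  rw [heq]
  apply DifferentiableAt.fun_sum
  intro i _
  apply DifferentiableAt.mul
  · exact (hcoord (s+1) i).sub (hcoord s i)
  · apply DifferentiableAt.fun_sum
    intro j _
    exact (hGent s i j).mul ((hcoord (s+1) j).sub (hcoord s j))

end Aux

/-- Strict decrease of the energy (Lemma 2): if the feasible curve `x` is not a
critical point of the discretized energy, and `x̃` is the curve produced by the
GEORCE update of `x`, then there exists `η ∈ (0,1]` such that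
`E((1-α)x + αx̃) < E(x)` for every `0 < α ≤ η`. -/
theorem georce_strict_decrease
    (d T : ℕ) (hd : 1 ≤ d) (hT : 2 ≤ T)
    (a b : EuclideanSpace ℝ (Fin d))
    (G : EuclideanSpace ℝ (Fin d) → Matrix (Fin d) (Fin d) ℝ)
    (hGsmooth : ∀ i j, ContDiff ℝ (⊤ : ℕ∞) fun y => G y i j)
    (hGsym : ∀ y, (G y).IsSymm)
    (hGpos : ∀ y, (G y).PosDef)
    (x : ℕ → EuclideanSpace ℝ (Fin d))
    (hx0 : x 0 = a) (hxT : x T = b)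
    (u : ℕ → EuclideanSpace ℝ (Fin d)) (hu : ∀ t, u t = x (t + 1) - x t)
    (utilde μ : ℕ → EuclideanSpace ℝ (Fin d))
    (hsys1 : ∀ t < T, (2 : ℝ) • toE d ((G (x t)).mulVec (utilde t)) + μ t = 0)
    (hsys2 : ∀ t, 1 ≤ t → t ≤ T - 1 →
      gradient (fun y => u t ⬝ᵥ (G y).mulVec (u t)) (x t) + μ t = μ (t - 1))
    (hsys3 : ∑ t ∈ Finset.range T, utilde t = b - a)
    (xtilde : ℕ → EuclideanSpace ℝ (Fin d))
    (hxtilde0 : xtilde 0 = a)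
    (hxtilde : ∀ t < T, xtilde (t + 1) = xtilde t + utilde t)
    (hnotcrit : ∃ t, 1 ≤ t ∧ t ≤ T - 1 ∧
      gradient (fun y => energy d T G (Function.update x t y)) (x t) ≠ 0) :
    ∃ η, 0 < η ∧ η ≤ 1 ∧ ∀ α : ℝ, 0 < α → α ≤ η →
      energy d T G (fun t => (1 - α) • x t + α • xtilde t) < energy d T G x := by
  classical
  set v : ℕ → EuclideanSpace ℝ (Fin d) := fun t => xtilde t - x t with hvdef
  set w : ℕ → EuclideanSpace ℝ (Fin d) := fun t => v (t + 1) - v t with hwdef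
  have hT1 : T - 1 + 1 = T := by omega
  have hv0 : v 0 = 0 := by simp only [hvdef]; rw [hxtilde0, hx0]; abel
  have hxsum : ∀ n, n ≤ T → xtilde n = a + ∑ t ∈ Finset.range n, utilde t := by
    intro n
    induction n with
    | zero => intro _; simp [hxtilde0]
    | succ k ih =>
      intro hk
      rw [hxtilde k (by omega), ih (by omega), Finset.sum_range_succ]
      abel
  have hvT : v T = 0 := by
    simp only [hvdef]
    rw [hxsum T le_rfl, hsys3, hxT]; abel
  have hwu : ∀ t, t < T → w t = utilde t - u t := by
    intro t ht
    simp only [hwdef, hvdef]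
    rw [hxtilde t ht, hu t]; abel
  have hν : ∀ t, 1 ≤ t → t ≤ T - 1 →
      gradient (fun y => u t ⬝ᵥ (G y).mulVec (u t)) (x t) = μ (t - 1) - μ t :=
    fun t h1 h2 => eq_sub_of_add_eq (hsys2 t h1 h2)
  have hinner : ∀ t, t < T → ∀ z : EuclideanSpace ℝ (Fin d),
      @inner ℝ _ _ (μ t) z = -(2 * (utilde t ⬝ᵥ (G (x t)).mulVec z)) := by
    intro t ht z
    have hμ : μ t = -((2:ℝ) • toE d ((G (x t)).mulVec (utilde t))) :=
      eq_neg_of_add_eq_zero_right (hsys1 t ht)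
    rw [hμ, inner_neg_left, real_inner_smul_left, georce_inner_dot]
    rw [show (toE d ((G (x t)).mulVec (utilde t)) : Fin d → ℝ) ⬝ᵥ z
        = utilde t ⬝ᵥ (G (x t)).mulVec z by
      simp only [toE, WithLp.ofLp_toLp]; exact georce_mulVec_dot (G (x t)) (hGsym (x t)) (utilde t) z]
  -- the function φ
  set φ : ℝ → ℝ := fun α => ∑ t ∈ Finset.range T,
      (u t + α • w t) ⬝ᵥ (G (x t + α • v t)).mulVec (u t + α • w t) with hφdef
  set D : ℝ := ∑ t ∈ Finset.range T, (2 * (u t ⬝ᵥ (G (x t)).mulVec (w t))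
      + @inner ℝ _ _ (gradient (fun y => u t ⬝ᵥ (G y).mulVec (u t)) (x t)) (v t)) with hDdef
  have hφ : HasDerivAt φ D 0 := by
    rw [hφdef, hDdef]
    exact HasDerivAt.fun_sum fun t _ =>
      georce_term_hasDerivAt hGsmooth hGsym (x t) (v t) (u t) (w t)
  have hφE : ∀ α : ℝ, energy d T G (fun t => (1 - α) • x t + α • xtilde t) = φ α := by
    intro α
    rw [hφdef]
    unfold energy
    refine Finset.sum_congr rfl fun t _ => ?_
    have h1 : ∀ s : ℕ, (1 - α) • x s + α • xtilde s = x s + α • v s := by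
      intro s; simp only [hvdef]; module
    have h2 : (x (t+1) + α • v (t+1)) - (x t + α • v t) = u t + α • w t := by
      simp only [hwdef, hvdef, hu t]; module
    simp only [h1, h2]
    rw [← WithLp.ofLp_sub (x := x (t+1) + α • v (t+1)), h2]; rfl
  have hφ0 : φ 0 = energy d T G x := by
    rw [hφdef]
    unfold energy
    refine Finset.sum_congr rfl fun t _ => ?_
    rw [hu t]
    simp
  by_cases hwz : ∀ t, t < T → w t = 0
  · -- contradiction with non-criticality
    exfalso
    obtain ⟨t0, ht01, ht02, hg⟩ := hnotcrit
    apply hg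
    have ht0T : t0 < T := by omega
    have ht0m : t0 - 1 < T := by omega
    have ht0p : t0 - 1 + 1 = t0 := by omega
    have ht0ne : t0 - 1 ≠ t0 := by omega
    have huu : ∀ t, t < T → utilde t = u t := by
      intro t ht
      have h := hwz t ht
      rw [hwu t ht] at h
      exact sub_eq_zero.mp h
    have hdiff := georce_update_energy_diff hGsmooth T t0 x
    have hdir : ∀ z : EuclideanSpace ℝ (Fin d),
        HasDerivAt (fun α : ℝ => energy d T G (Function.update x t0 (x t0 + α • z))) 0 0 := by
      intro z
      set e : ℕ → EuclideanSpace ℝ (Fin d) := fun s => if s = t0 then z else 0 with hedef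
      have hfun : (fun α : ℝ => energy d T G (Function.update x t0 (x t0 + α • z)))
          = fun α : ℝ => ∑ s ∈ Finset.range T,
              (u s + α • (e (s+1) - e s)) ⬝ᵥ (G (x s + α • e s)).mulVec
                (u s + α • (e (s+1) - e s)) := by
        funext α
        unfold energy
        refine Finset.sum_congr rfl fun s _ => ?_
        have hupd : ∀ k : ℕ, Function.update x t0 (x t0 + α • z) k = x k + α • e k := by
          intro k
          by_cases h : k = t0
          · rw [h]
            simp only [Function.update_self, hedef, if_pos rfl]
          · rw [Function.update_of_ne h]
            simp only [hedef, if_neg h, smul_zero, add_zero]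
        have h2 : (x (s+1) + α • e (s+1)) - (x s + α • e s)
            = u s + α • (e (s+1) - e s) := by
          rw [hu s]; module
        simp only [hupd, h2]
        rw [← WithLp.ofLp_sub (x := x (s+1) + α • e (s+1)), h2]; rfl
      rw [hfun]
      have hkey := HasDerivAt.fun_sum (u := Finset.range T) fun s (_ : s ∈ Finset.range T) =>
        georce_term_hasDerivAt hGsmooth hGsym (x s) (e s) (u s) (e (s+1) - e s)
      refine hkey.congr_deriv ?_
      have hsub : ({t0 - 1, t0} : Finset ℕ) ⊆ Finset.range T := by
        intro s hs
        simp only [Finset.mem_insert, Finset.mem_singleton] at hs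
        rcases hs with h | h <;> simp [Finset.mem_range] <;> omega
      rw [← Finset.sum_subset hsub]
      · rw [Finset.sum_pair ht0ne]
        have he1 : e (t0 - 1) = 0 := by simp only [hedef, if_neg ht0ne]
        have he2 : e (t0 - 1 + 1) = z := by rw [ht0p]; simp only [hedef, if_pos rfl]
        have he3 : e t0 = z := by simp only [hedef, if_pos rfl]
        have he4 : e (t0 + 1) = 0 := by
          simp only [hedef, if_neg (show t0 + 1 ≠ t0 by omega)]
        rw [he1, he2, he3, he4]
        rw [hν t0 ht01 ht02]
        rw [inner_sub_left, hinner (t0 - 1) ht0m z, hinner t0 ht0T z,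
          huu (t0 - 1) ht0m, huu t0 ht0T]
        have hz1 : (z - 0 : EuclideanSpace ℝ (Fin d)) = z := by simp
        have hz2 : u t0 ⬝ᵥ (G (x t0)).mulVec (WithLp.ofLp ((0 : EuclideanSpace ℝ (Fin d)) - z))
            = -(u t0 ⬝ᵥ (G (x t0)).mulVec z) := by
          have : ((0 : EuclideanSpace ℝ (Fin d)) - z) = -z := by simp
          rw [this]
          have hneg : (G (x t0)).mulVec (WithLp.ofLp (-z : EuclideanSpace ℝ (Fin d)))
              = -((G (x t0)).mulVec z) := by
            exact Matrix.mulVec_neg (z : Fin d → ℝ) (G (x t0))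
          rw [hneg, dotProduct_neg]
        have hz3 : @inner ℝ _ _
            (gradient (fun y => u (t0-1) ⬝ᵥ (G y).mulVec (u (t0-1))) (x (t0-1)))
            (0 : EuclideanSpace ℝ (Fin d)) = 0 := inner_zero_right _
        rw [hz1, hz2, hz3]
        ring
      · intro s hsr hs
        simp only [Finset.mem_insert, Finset.mem_singleton, not_or] at hs
        have hes : e s = 0 := by simp only [hedef, if_neg hs.2]
        have hes1 : e (s+1) = 0 := by
          simp only [hedef, if_neg (show s + 1 ≠ t0 by omega)]
        rw [hes, hes1]
        simp
    -- fderiv is zero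
    have hfd : fderiv ℝ (fun y => energy d T G (Function.update x t0 y)) (x t0) = 0 := by
      apply ContinuousLinearMap.ext
      intro z
      have hF : HasFDerivAt (fun y => energy d T G (Function.update x t0 y))
          (fderiv ℝ (fun y => energy d T G (Function.update x t0 y)) (x t0))
          (x t0 + (0:ℝ) • z) := by
        rw [show x t0 + (0:ℝ) • z = x t0 by simp]
        exact hdiff.hasFDerivAt
      have h1 := hF.comp_hasDerivAt 0 (georce_line_hasDerivAt (x t0) z)
      have h2 := h1.unique (hdir z)
      simpa using h2
    rw [gradient, hfd]
    simp
  · -- strict decrease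
    push_neg at hwz
    obtain ⟨t1, ht1T, ht1⟩ := hwz
    -- value of D
    have hDval : D = -2 * ∑ t ∈ Finset.range T, (w t ⬝ᵥ (G (x t)).mulVec (w t)) := by
      rw [hDdef, Finset.sum_add_distrib]
      have hS2 : (∑ t ∈ Finset.range T,
            @inner ℝ _ _ (gradient (fun y => u t ⬝ᵥ (G y).mulVec (u t)) (x t)) (v t))
          = ∑ t ∈ Finset.range T, @inner ℝ _ _ (μ t) (w t) := by
        have hL : ∑ t ∈ Finset.range T,
              @inner ℝ _ _ (gradient (fun y => u t ⬝ᵥ (G y).mulVec (u t)) (x t)) (v t)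
            = ∑ i ∈ Finset.range (T-1),
              @inner ℝ _ _ (gradient (fun y => u (i+1) ⬝ᵥ (G y).mulVec (u (i+1))) (x (i+1))) (v (i+1)) := by
          conv_lhs => rw [← hT1]
          rw [Finset.sum_range_succ']
          rw [hv0]
          simp
        have hR : ∑ t ∈ Finset.range T, @inner ℝ _ _ (μ t) (w t)
            = (∑ t ∈ Finset.range T, @inner ℝ _ _ (μ t) (v (t+1)))
              - ∑ t ∈ Finset.range T, @inner ℝ _ _ (μ t) (v t) := by
          rw [← Finset.sum_sub_distrib]
          refine Finset.sum_congr rfl fun t _ => ?_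
          simp only [hwdef]
          rw [inner_sub_right]
        have hA : ∑ t ∈ Finset.range T, @inner ℝ _ _ (μ t) (v (t+1))
            = ∑ i ∈ Finset.range (T-1), @inner ℝ _ _ (μ i) (v (i+1)) := by
          conv_lhs => rw [← hT1]
          rw [Finset.sum_range_succ, hT1, hvT]
          simp
        have hB : ∑ t ∈ Finset.range T, @inner ℝ _ _ (μ t) (v t)
            = ∑ i ∈ Finset.range (T-1), @inner ℝ _ _ (μ (i+1)) (v (i+1)) := by
          conv_lhs => rw [← hT1]
          rw [Finset.sum_range_succ']
          rw [hv0]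
          simp
        rw [hL, hR, hA, hB, ← Finset.sum_sub_distrib]
        refine Finset.sum_congr rfl fun i hi => ?_
        have hi' : i < T - 1 := Finset.mem_range.mp hi
        rw [hν (i+1) (by omega) (by omega)]
        simp only [Nat.add_sub_cancel]
        rw [inner_sub_left]
      rw [hS2]
      have hrw : ∀ t ∈ Finset.range T, @inner ℝ _ _ (μ t) (w t)
          = -(2 * (utilde t ⬝ᵥ (G (x t)).mulVec (w t))) :=
        fun t ht => hinner t (Finset.mem_range.mp ht) (w t)
      rw [Finset.sum_congr rfl hrw, Finset.mul_sum, ← Finset.sum_add_distrib]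
      refine Finset.sum_congr rfl fun t ht => ?_
      have htT := Finset.mem_range.mp ht
      have hut : utilde t = u t + w t := by rw [hwu t htT]; abel
      rw [hut]
      have hadd : ((u t + w t : EuclideanSpace ℝ (Fin d)) : Fin d → ℝ) ⬝ᵥ (G (x t)).mulVec (w t)
          = u t ⬝ᵥ (G (x t)).mulVec (w t) + w t ⬝ᵥ (G (x t)).mulVec (w t) := by
        exact add_dotProduct (u t : Fin d → ℝ) (w t : Fin d → ℝ)
          ((G (x t)).mulVec (w t))
      rw [hadd]
      ring
    have hDneg : D < 0 := by
      rw [hDval]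
      have hnn : ∀ t ∈ Finset.range T, 0 ≤ w t ⬝ᵥ (G (x t)).mulVec (w t) := by
        intro t _
        have := (hGpos (x t)).posSemidef.re_dotProduct_nonneg (w t : Fin d → ℝ)
        simpa using this
      have hp : 0 < w t1 ⬝ᵥ (G (x t1)).mulVec (w t1) := by
        have := (hGpos (x t1)).re_dotProduct_pos (x := (w t1 : Fin d → ℝ)) (by simpa using ht1)
        simpa using this
      have hpos : 0 < ∑ t ∈ Finset.range T, w t ⬝ᵥ (G (x t)).mulVec (w t) :=
        Finset.sum_pos' hnn ⟨t1, Finset.mem_range.mpr ht1T, hp⟩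
      linarith
    -- topology
    have htend := hasDerivAt_iff_tendsto_slope.mp hφ
    have hev : ∀ᶠ α in nhdsWithin (0:ℝ) (Set.Ioi 0), slope φ 0 α < 0 :=
      (htend.mono_left (nhdsWithin_mono 0 (fun y hy => ne_of_gt hy))).eventually
        (gt_mem_nhds hDneg)
    obtain ⟨c, hc, hsubs⟩ := mem_nhdsGT_iff_exists_Ioc_subset.mp hev
    refine ⟨min c 1, lt_min hc one_pos, min_le_right _ _, ?_⟩
    intro α hα hαle
    have hαc : α ∈ Set.Ioc (0:ℝ) c := ⟨hα, le_trans hαle (min_le_left _ _)⟩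
    have hslope := hsubs hαc
    simp only [Set.mem_setOf_eq] at hslope
    rw [slope_def_field, sub_zero] at hslope
    have hlt : φ α - φ 0 < 0 := by
      rcases div_neg_iff.mp hslope with ⟨h1, h2⟩ | ⟨h1, h2⟩
      · linarith
      · linarith
    rw [hφE α, ← hφ0]
    linarith
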